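/- Let y : ℕ → ℂ satisfy the Jacobi equation a_{n-1} y_{n-1} + a_n y_{n+1} + b_n y_n = z y_n for n ≥ 1, and define u_n ∈ ℂ² by (y_n, y_{n+1})ᵗ = T_n u_n, where T_n = [[c_n, s_n],[c_{n+1}, s_{n+1}]] is invertible. Then J(u_{n+1} − u_n) = z H_{n+1} u_n where H_{n+1} = [[c_{n+1}², c_{n+1} s_{n+1}],[c_{n+1} s_{n+1}, s_{n+1}²]] and J = [[0,-1],[1,0]]. -/

import Mathlib

/-!
Row 2 of `T n` equals row 1 of `T (n + 1)`, so `(c (n+1), s (n+1)) ⬝ u (n+1) = y (n+1)` is computed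
by both `u n` and `u (n+1)`: the increment `u (n+1) - u n` is orthogonal to `(c (n+1), s (n+1))`.
The Jacobi equation for `y`, minus the zero-energy equations for `c` and `s` tested against
`u (n+1)`, gives `a n (c n, s n) ⬝ (u (n+1) - u n) = -z (c (n+1), s (n+1)) ⬝ u n`. The constant
Wronskian `a n (c n s (n+1) - c (n+1) s n) = -1` makes this 2×2 system uniquely solvable, with
solution `z ((c (n+1), s (n+1)) ⬝ u n) (s (n+1), -c (n+1))`; applying `J` gives `z H (n+1) u n`.
-/

open Matrix

noncomputable section

def JmatC : Matrix (Fin 2) (Fin 2) ℂ := !![0, -1; 1, 0]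

section Jacobi

variable {R : Type*} [CommRing R]

def IsJacobiSolution (a b : ℕ → R) (z : R) (y : ℕ → R) : Prop :=
  ∀ n, a n * y n + a (n + 1) * y (n + 2) + b (n + 1) * y (n + 1) = z * y (n + 1)

def wronskian (c s : ℕ → R) (n : ℕ) : R :=
  c n * s (n + 1) - c (n + 1) * s n

variable {a b c s : ℕ → R} {z : R}

theorem IsJacobiSolution.mul_wronskian_succ (hc : IsJacobiSolution a b z c)
    (hs : IsJacobiSolution a b z s) (n : ℕ) :
    a (n + 1) * wronskian c s (n + 1) = a n * wronskian c s n := by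
  unfold wronskian
  linear_combination c (n + 1) * hs n - s (n + 1) * hc n

theorem IsJacobiSolution.mul_wronskian_eq (hc : IsJacobiSolution a b z c)
    (hs : IsJacobiSolution a b z s) (n : ℕ) :
    a n * wronskian c s n = a 0 * wronskian c s 0 := by
  induction n with
  | zero => rfl
  | succ n ih => rw [hc.mul_wronskian_succ hs, ih]

/-- Cramer's rule: the determinant `c₀ * s₁ - c₁ * s₀` has inverse `-a`. -/
theorem eq_smul_of_wronskian_system {a c₀ s₀ c₁ s₁ k : R} {d : Fin 2 → R}
    (hW : a * (c₀ * s₁ - c₁ * s₀) = -1) (h₁ : c₁ * d 0 + s₁ * d 1 = 0)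
    (h₀ : a * (c₀ * d 0 + s₀ * d 1) = -k) :
    d = k • ![s₁, -c₁] := by
  ext i
  fin_cases i
  · simp only [Fin.zero_eta, Pi.smul_apply, cons_val_zero, smul_eq_mul]
    linear_combination d 0 * hW + a * s₀ * h₁ - s₁ * h₀
  · simp only [Fin.mk_one, Pi.smul_apply, cons_val_one, cons_val_zero, smul_eq_mul]
    linear_combination d 1 * hW - a * c₀ * h₁ + c₁ * h₀

theorem transferMatrix_mulVec_eq_iff {c₀ s₀ c₁ s₁ y₀ y₁ : R} (v : Fin 2 → R) :
    !![c₀, s₀; c₁, s₁] *ᵥ v = ![y₀, y₁] ↔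
      c₀ * v 0 + s₀ * v 1 = y₀ ∧ c₁ * v 0 + s₁ * v 1 = y₁ := by
  simp [← List.ofFn_inj, vecHead, vecTail]

theorem IsJacobiSolution.coeff_succ_sub {y : ℕ → R} {u : ℕ → Fin 2 → R}
    (hc : IsJacobiSolution a b 0 c) (hs : IsJacobiSolution a b 0 s)
    (hy : IsJacobiSolution a b z y)
    (hu : ∀ n, !![c n, s n; c (n + 1), s (n + 1)] *ᵥ u n = ![y n, y (n + 1)])
    (hW : a 0 * wronskian c s 0 = -1) (n : ℕ) :
    u (n + 1) - u n =
      (z * (c (n + 1) * u n 0 + s (n + 1) * u n 1)) • ![s (n + 1), -c (n + 1)] := by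
  obtain ⟨hn₀, hn₁⟩ := (transferMatrix_mulVec_eq_iff (u n)).1 (hu n)
  obtain ⟨hn₁', hn₂⟩ := (transferMatrix_mulVec_eq_iff (u (n + 1))).1 (hu (n + 1))
  refine eq_smul_of_wronskian_system ((hc.mul_wronskian_eq hs n).trans hW) ?_ ?_
  · simp only [Pi.sub_apply]
    linear_combination hn₁' - hn₁
  · simp only [Pi.sub_apply]
    linear_combination u (n + 1) 0 * hc n + u (n + 1) 1 * hs n - a (n + 1) * hn₂
      - b (n + 1) * hn₁' - a n * hn₀ + z * hn₁ - hy n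

end Jacobi

theorem jacobi_to_discrete_canonical_system_general (a b : ℕ → ℝ) (c s : ℕ → ℝ) (z : ℂ)
    (ha0 : a 0 = -1)
    (hc : ∀ n, a n * c n + a (n + 1) * c (n + 2) + b (n + 1) * c (n + 1) = 0)
    (hs : ∀ n, a n * s n + a (n + 1) * s (n + 2) + b (n + 1) * s (n + 1) = 0)
    (hc0 : c 0 = 1) (hc1 : c 1 = 0) (hs0 : s 0 = 0) (hs1 : s 1 = 1)
    (y : ℕ → ℂ)
    (hy : ∀ n, (a n : ℂ) * y n + (a (n + 1) : ℂ) * y (n + 2) + (b (n + 1) : ℂ) * y (n + 1)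
        = z * y (n + 1))
    (u : ℕ → Fin 2 → ℂ)
    -- (y n, y (n+1))ᵗ = T n · u n  with  T n = !![c n, s n; c (n+1), s (n+1)]
    (hu : ∀ n, (!![(c n : ℂ), (s n : ℂ); (c (n + 1) : ℂ), (s (n + 1) : ℂ)]) *ᵥ u n
        = ![y n, y (n + 1)]) :
    ∀ n, JmatC *ᵥ (u (n + 1) - u n)
        = z • ((!![((c (n + 1) : ℝ) ^ 2 : ℂ), ((c (n + 1) * s (n + 1) : ℝ) : ℂ);
                  ((c (n + 1) * s (n + 1) : ℝ) : ℂ), ((s (n + 1) : ℝ) ^ 2 : ℂ)]) *ᵥ u n) := by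
  have hcℂ : IsJacobiSolution (fun n ↦ (a n : ℂ)) (fun n ↦ (b n : ℂ)) 0 (fun n ↦ (c n : ℂ)) :=
    fun n ↦ by simpa using congrArg Complex.ofReal (hc n)
  have hsℂ : IsJacobiSolution (fun n ↦ (a n : ℂ)) (fun n ↦ (b n : ℂ)) 0 (fun n ↦ (s n : ℂ)) :=
    fun n ↦ by simpa using congrArg Complex.ofReal (hs n)
  have hW : (a 0 : ℂ) * wronskian (fun n ↦ (c n : ℂ)) (fun n ↦ (s n : ℂ)) 0 = -1 := by
    simp [wronskian, ha0, hc0, hc1, hs0, hs1]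
  intro n
  rw [hcℂ.coeff_succ_sub hsℂ hy hu hW n]
  ext i
  fin_cases i <;> simp [JmatC, mulVec, vecHead, vecTail] <;> ring

theorem jacobi_to_discrete_canonical_system (a b : ℕ → ℝ) (c s : ℕ → ℝ) (z : ℂ)
    (ha : ∀ n, a n ≠ 0) (ha0 : a 0 = -1)
    (hc : ∀ n, a n * c n + a (n + 1) * c (n + 2) + b (n + 1) * c (n + 1) = 0)
    (hs : ∀ n, a n * s n + a (n + 1) * s (n + 2) + b (n + 1) * s (n + 1) = 0)
    (hc0 : c 0 = 1) (hc1 : c 1 = 0) (hs0 : s 0 = 0) (hs1 : s 1 = 1)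
    (y : ℕ → ℂ)
    (hy : ∀ n, (a n : ℂ) * y n + (a (n + 1) : ℂ) * y (n + 2) + (b (n + 1) : ℂ) * y (n + 1)
        = z * y (n + 1))
    (u : ℕ → Fin 2 → ℂ)
    -- (y n, y (n+1))ᵗ = T n · u n  with  T n = !![c n, s n; c (n+1), s (n+1)]
    (hu : ∀ n, (!![(c n : ℂ), (s n : ℂ); (c (n + 1) : ℂ), (s (n + 1) : ℂ)]) *ᵥ u n
        = ![y n, y (n + 1)]) :
    ∀ n, JmatC *ᵥ (u (n + 1) - u n)
        = z • ((!![((c (n + 1) : ℝ) ^ 2 : ℂ), ((c (n + 1) * s (n + 1) : ℝ) : ℂ);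
                  ((c (n + 1) * s (n + 1) : ℝ) : ℂ), ((s (n + 1) : ℝ) ^ 2 : ℂ)]) *ᵥ u n) :=
  jacobi_to_discrete_canonical_system_general a b c s z ha0 hc hs hc0 hc1 hs0 hs1 y hy u hu

end
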